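/- A right S-act Q over a monoid S is InC-injective if and only if it is injective relative to all inclusions into cyclic acts, i.e., if and only if for every cyclic S-act B, every subact C of B, and every homomorphism f : C → Q, there is a homomorphism B → Q extending f. -/
import Mathlib


universe u

/-- A right `S`-act structure on a nonempty type `A`: a right action of the monoid `S`. -/
class RightAct (S : Type u) [Monoid S] (A : Type u) : Type u where
  act : A → S → A
  act_one : ∀ a : A, act a 1 = a
  act_mul : ∀ (a : A) (s t : S), act (act a s) t = act a (s * t)
  nonempty : Nonempty A

infixl:70 " ⊛ " => RightAct.act

/-- `S` is left reversible: every two right ideals (equiv. principal ones) intersect. -/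
def LeftReversible (S : Type u) [Monoid S] : Prop :=
  ∀ a b : S, ∃ u v : S, a * u = b * v

/-- A left zero element of the monoid `S`. -/
def IsLeftZero (S : Type u) [Monoid S] (z : S) : Prop :=
  ∀ s : S, z * s = z

/-- `f : A → B` is a homomorphism of right `S`-acts. -/
def IsActHom (S : Type u) [Monoid S] {A B : Type u} [RightAct S A] [RightAct S B]
    (f : A → B) : Prop :=
  ∀ (a : A) (s : S), f (a ⊛ s) = f a ⊛ s

/-- The restriction of `f : A → B` to the subset `C` is a homomorphism of right `S`-acts. -/
def IsActHomOn (S : Type u) [Monoid S] {A B : Type u} [RightAct S A] [RightAct S B]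
    (f : A → B) (C : Set A) : Prop :=
  ∀ a ∈ C, ∀ s : S, f (a ⊛ s) = f a ⊛ s

/-- A subact: a nonempty subset closed under the action. -/
def IsSubact (S : Type u) [Monoid S] {A : Type u} [RightAct S A] (C : Set A) : Prop :=
  C.Nonempty ∧ ∀ a ∈ C, ∀ s : S, a ⊛ s ∈ C

/-- A zero element of an act: fixed by the action of every `s ∈ S`. -/
def IsZeroElem (S : Type u) [Monoid S] {A : Type u} [RightAct S A] (θ : A) : Prop :=
  ∀ s : S, θ ⊛ s = θ

/-- A subset `D` (viewed as an act) is decomposable: it is the disjoint union of two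
nonempty subacts. -/
def DecomposableSet (S : Type u) [Monoid S] {A : Type u} [RightAct S A] (D : Set A) : Prop :=
  ∃ B C : Set A, IsSubact S B ∧ IsSubact S C ∧ B ∪ C = D ∧ B ∩ C = ∅

/-- A subset (viewed as an act) is indecomposable. -/
def IndecomposableSet (S : Type u) [Monoid S] {A : Type u} [RightAct S A] (D : Set A) : Prop :=
  ¬ DecomposableSet S D

/-- The act `A` is decomposable. -/
def Decomposable (S : Type u) [Monoid S] (A : Type u) [RightAct S A] : Prop :=
  DecomposableSet S (Set.univ : Set A)

/-- The act `A` is indecomposable. -/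
def Indecomposable (S : Type u) [Monoid S] (A : Type u) [RightAct S A] : Prop :=
  ¬ Decomposable S A

/-- A cyclic act: generated by a single element. -/
def CyclicAct (S : Type u) [Monoid S] (A : Type u) [RightAct S A] : Prop :=
  ∃ a : A, ∀ x : A, ∃ s : S, x = a ⊛ s

/-- `A` is a retract of `B`. -/
def IsRetractOf (S : Type u) [Monoid S] (A B : Type u) [RightAct S A] [RightAct S B] : Prop :=
  ∃ (i : A → B) (p : B → A), IsActHom S i ∧ IsActHom S p ∧ ∀ a : A, p (i a) = a

/-- `Q` is an injective act: every homomorphism from a subact `C` of any act `B` into `Q`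
extends to `B`. -/
def ActInjective (S : Type u) [Monoid S] (Q : Type u) [RightAct S Q] : Prop :=
  ∀ (B : Type u) [RightAct S B], ∀ C : Set B, IsSubact S C →
    ∀ f : B → Q, IsActHomOn S f C →
      ∃ g : B → Q, IsActHom S g ∧ Set.EqOn g f C

/-- `Q` is InC-injective: injective relative to all embeddings into indecomposable acts. -/
def InCInjective (S : Type u) [Monoid S] (Q : Type u) [RightAct S Q] : Prop :=
  ∀ (B : Type u) [RightAct S B], Indecomposable S B → ∀ C : Set B, IsSubact S C →
    ∀ f : B → Q, IsActHomOn S f C →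
      ∃ g : B → Q, IsActHom S g ∧ Set.EqOn g f C

/-- `Q` is InD-injective: injective relative to all embeddings of indecomposable acts. -/
def InDInjective (S : Type u) [Monoid S] (Q : Type u) [RightAct S Q] : Prop :=
  ∀ (B : Type u) [RightAct S B], ∀ C : Set B, IsSubact S C → IndecomposableSet S C →
    ∀ f : B → Q, IsActHomOn S f C →
      ∃ g : B → Q, IsActHom S g ∧ Set.EqOn g f C

/-- `Q` is PInD-injective: every monomorphism from an indecomposable subact extends. -/
def PInDInjective (S : Type u) [Monoid S] (Q : Type u) [RightAct S Q] : Prop :=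
  ∀ (B : Type u) [RightAct S B], ∀ C : Set B, IsSubact S C → IndecomposableSet S C →
    ∀ f : B → Q, IsActHomOn S f C → Set.InjOn f C →
      ∃ g : B → Q, IsActHom S g ∧ Set.EqOn g f C

/-- `A` is quasi injective: homomorphisms from subacts of `A` to `A` extend to `A`. -/
def QuasiInjective (S : Type u) [Monoid S] (A : Type u) [RightAct S A] : Prop :=
  ∀ C : Set A, IsSubact S C → ∀ f : A → A, IsActHomOn S f C →
    ∃ g : A → A, IsActHom S g ∧ Set.EqOn g f C

/-- `A` is pseudo injective: monomorphisms from subacts of any act into `A` extend. -/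
def PseudoInjective (S : Type u) [Monoid S] (A : Type u) [RightAct S A] : Prop :=
  ∀ (C : Type u) [RightAct S C], ∀ B : Set C, IsSubact S B →
    ∀ f : C → A, IsActHomOn S f B → Set.InjOn f B →
      ∃ g : C → A, IsActHom S g ∧ Set.EqOn g f B

/-- A subact `Q` of `A` (viewed as an act in its own right) is injective. -/
def ActInjectiveSet (S : Type u) [Monoid S] {A : Type u} [RightAct S A] (Q : Set A) : Prop :=
  ∀ (B : Type u) [RightAct S B], ∀ C : Set B, IsSubact S C →
    ∀ f : B → A, IsActHomOn S f C → (∀ c ∈ C, f c ∈ Q) →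
      ∃ g : B → A, IsActHom S g ∧ (∀ b : B, g b ∈ Q) ∧ Set.EqOn g f C

/-- A subact `Q` of `A` (viewed as an act in its own right) is InD-injective. -/
def InDInjectiveSet (S : Type u) [Monoid S] {A : Type u} [RightAct S A] (Q : Set A) : Prop :=
  ∀ (B : Type u) [RightAct S B], ∀ C : Set B, IsSubact S C → IndecomposableSet S C →
    ∀ f : B → A, IsActHomOn S f C → (∀ c ∈ C, f c ∈ Q) →
      ∃ g : B → A, IsActHom S g ∧ (∀ b : B, g b ∈ Q) ∧ Set.EqOn g f C

/-- A subact `Q` of `A` (viewed as an act in its own right) is PInD-injective. -/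
def PInDInjectiveSet (S : Type u) [Monoid S] {A : Type u} [RightAct S A] (Q : Set A) : Prop :=
  ∀ (B : Type u) [RightAct S B], ∀ C : Set B, IsSubact S C → IndecomposableSet S C →
    ∀ f : B → A, IsActHomOn S f C → Set.InjOn f C → (∀ c ∈ C, f c ∈ Q) →
      ∃ g : B → A, IsActHom S g ∧ (∀ b : B, g b ∈ Q) ∧ Set.EqOn g f C

/-- The monoid `S` as a right act over itself, by multiplication. -/
instance selfAct (S : Type u) [Monoid S] : RightAct S S where
  act a s := a * s
  act_one := mul_one
  act_mul a s t := mul_assoc a s t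
  nonempty := ⟨1⟩

/-- `Q` is weakly injective: homomorphisms from right ideals of `S` into `Q` extend to `S`. -/
def WeaklyInjective (S : Type u) [Monoid S] (Q : Type u) [RightAct S Q] : Prop :=
  ∀ I : Set S, IsSubact S I → ∀ f : S → Q, IsActHomOn S f I →
    ∃ g : S → Q, IsActHom S g ∧ Set.EqOn g f I

/-- The relation whose equivalence closure has the indecomposable components as classes. -/
def ActRel (S : Type u) [Monoid S] {A : Type u} [RightAct S A] (a b : A) : Prop :=
  ∃ s : S, b = a ⊛ s

/-- The indecomposable component of the element `a` of an act. -/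
def ActComponent (S : Type u) [Monoid S] {A : Type u} [RightAct S A] (a : A) : Set A :=
  {b | Relation.EqvGen (ActRel S) a b}

/-- `Q` is InC-injective iff it is injective relative to all inclusions
into cyclic acts. -/
theorem inCInjective_iff_cyclic_codomain (S : Type u) [Monoid S]
    (Q : Type u) [RightAct S Q] :
    InCInjective S Q ↔
      ∀ (B : Type u) [RightAct S B], CyclicAct S B → ∀ C : Set B, IsSubact S C →
        ∀ f : B → Q, IsActHomOn S f C →
          ∃ g : B → Q, IsActHom S g ∧ Set.EqOn g f C := by
  constructor
  · -- forward: cyclic acts are indecomposable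
    intro hQ B _ hcyc C hC f hf
    refine hQ B ?_ C hC f hf
    rintro ⟨B1, B2, ⟨⟨x1, hx1⟩, hB1⟩, ⟨⟨x2, hx2⟩, hB2⟩, hun, hint⟩
    obtain ⟨a, ha⟩ := hcyc
    have hmem : a ∈ B1 ∪ B2 := hun ▸ Set.mem_univ a
    rcases hmem with h1 | h2
    · obtain ⟨s, hs⟩ := ha x2
      have : x2 ∈ B1 ∩ B2 := ⟨hs ▸ hB1 a h1 s, hx2⟩
      simp [hint] at this
    · obtain ⟨s, hs⟩ := ha x1
      have : x1 ∈ B1 ∩ B2 := ⟨hx1, hs ▸ hB2 a h2 s⟩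
      simp [hint] at this
  · -- backward direction
    intro hQ B _ hB C hC f hf
    classical
    haveI hQne : Nonempty Q := RightAct.nonempty S
    -- the collection of "good" graphs of partial homomorphisms extending f
    set 𝒮 : Set (Set (B × Q)) :=
      {G | (∀ ⦃b : B⦄ ⦃q q' : Q⦄, (b, q) ∈ G → (b, q') ∈ G → q = q')
        ∧ (∀ c ∈ C, (c, f c) ∈ G)
        ∧ (∀ ⦃b : B⦄ ⦃q : Q⦄, (b, q) ∈ G → ∀ s : S, (b ⊛ s, q ⊛ s) ∈ G)} with h𝒮
    have hG0 : {p : B × Q | p.1 ∈ C ∧ p.2 = f p.1} ∈ 𝒮 := by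
      refine ⟨?_, ?_, ?_⟩
      · intro b q q' hq hq'
        exact hq.2.trans hq'.2.symm
      · intro c hc; exact ⟨hc, rfl⟩
      · intro b q hq s
        exact ⟨hC.2 b hq.1 s, by
          show q ⊛ s = f (b ⊛ s)
          rw [hf b hq.1 s]
          exact congrArg (fun y : Q => y ⊛ s) hq.2⟩
    obtain ⟨G, -, hGmem, hGmax⟩ := zorn_subset_nonempty 𝒮 (by
      intro c hc hchain hcne
      refine ⟨⋃₀ c, ⟨?_, ?_, ?_⟩, fun s hs => Set.subset_sUnion_of_mem hs⟩
      · rintro b q q' ⟨G1, hG1, hbq⟩ ⟨G2, hG2, hbq'⟩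
        rcases hchain.total hG1 hG2 with h | h
        · exact (hc hG2).1 (h hbq) hbq'
        · exact (hc hG1).1 hbq (h hbq')
      · obtain ⟨G1, hG1⟩ := hcne
        intro x hx
        exact ⟨G1, hG1, (hc hG1).2.1 x hx⟩
      · rintro b q ⟨G1, hG1, hbq⟩ s
        exact ⟨G1, hG1, (hc hG1).2.2 hbq s⟩) _ hG0
    have hfun := hGmem.1
    have hCf := hGmem.2.1
    have hcl := hGmem.2.2
    -- key step: if the orbit of b meets the domain of G, then b is in the domain
    have key : ∀ b : B, (∃ s : S, ∃ q : Q, (b ⊛ s, q) ∈ G) → ∃ q : Q, (b, q) ∈ G := by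
      rintro b ⟨s0, q0, hbs0⟩
      -- the cyclic act generated by b
      set T := {x : B // ∃ s : S, x = b ⊛ s} with hT
      letI : RightAct S T :=
        { act := fun x s => ⟨x.1 ⊛ s, by
            obtain ⟨t, ht⟩ := x.2
            exact ⟨t * s, by rw [ht, RightAct.act_mul]⟩⟩
          act_one := fun x => Subtype.ext (RightAct.act_one x.1)
          act_mul := fun x s t => Subtype.ext (RightAct.act_mul x.1 s t)
          nonempty := ⟨⟨b, 1, (RightAct.act_one b).symm⟩⟩ }
      have hTcyc : CyclicAct S T := by
        refine ⟨⟨b, 1, (RightAct.act_one b).symm⟩, ?_⟩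
        rintro ⟨x, s, rfl⟩
        exact ⟨s, Subtype.ext rfl⟩
      set C' : Set T := {t | ∃ q : Q, (t.1, q) ∈ G} with hC'
      have hC'sub : IsSubact S C' := by
        constructor
        · exact ⟨⟨b ⊛ s0, s0, rfl⟩, q0, hbs0⟩
        · rintro t ⟨q, hq⟩ s
          exact ⟨q ⊛ s, hcl hq s⟩
      set f' : T → Q := fun t =>
        if h : ∃ q : Q, (t.1, q) ∈ G then Classical.choose h else Classical.arbitrary Q
        with hf'
      have hf'spec : ∀ t : T, ∀ ht : (∃ q : Q, (t.1, q) ∈ G), (t.1, f' t) ∈ G := by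
        intro t ht
        have h1 : f' t = Classical.choose ht := dif_pos ht
        rw [h1]
        exact Classical.choose_spec ht
      have hf'hom : IsActHomOn S f' C' := by
        intro t ht s
        have h1 : (t.1, f' t) ∈ G := hf'spec t ht
        have h2 : ((t ⊛ s).1, f' t ⊛ s) ∈ G := hcl h1 s
        have ht2 : ∃ q : Q, ((t ⊛ s).1, q) ∈ G := ⟨f' t ⊛ s, h2⟩
        exact hfun (hf'spec _ ht2) h2
      obtain ⟨h, hhom, heq⟩ := hQ T hTcyc C' hC'sub f' hf'hom
      -- enlarge G by the graph of h
      set G' : Set (B × Q) := G ∪ Set.range (fun t : T => (t.1, h t)) with hG'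
      have hG'mem : G' ∈ 𝒮 := by
        refine ⟨?_, ?_, ?_⟩
        · rintro x q q' (hq | ⟨t, ht⟩) (hq' | ⟨t', ht'⟩)
          · exact hfun hq hq'
          · have e1 : t'.1 = x := congrArg Prod.fst ht'
            have e2 : h t' = q' := congrArg Prod.snd ht'
            have htC : t' ∈ C' := ⟨q, e1 ▸ hq⟩
            have h3 : (t'.1, f' t') ∈ G := hf'spec t' htC
            rw [← e2, heq htC]
            exact hfun hq (e1 ▸ h3)
          · have e1 : t.1 = x := congrArg Prod.fst ht
            have e2 : h t = q := congrArg Prod.snd ht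
            have htC : t ∈ C' := ⟨q', e1 ▸ hq'⟩
            have h3 : (t.1, f' t) ∈ G := hf'spec t htC
            rw [← e2, heq htC]
            exact hfun (e1 ▸ h3) hq'
          · have e1 : t.1 = x := congrArg Prod.fst ht
            have e2 : h t = q := congrArg Prod.snd ht
            have e1' : t'.1 = x := congrArg Prod.fst ht'
            have e2' : h t' = q' := congrArg Prod.snd ht'
            have het : t = t' := Subtype.ext (e1.trans e1'.symm)
            rw [← e2, ← e2', het]
        · intro x hx; exact Or.inl (hCf x hx)
        · rintro x q (hq | ⟨t, ht⟩) s
          · exact Or.inl (hcl hq s)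
          · have e1 : t.1 = x := congrArg Prod.fst ht
            have e2 : h t = q := congrArg Prod.snd ht
            refine Or.inr ⟨t ⊛ s, ?_⟩
            show ((t ⊛ s).1, h (t ⊛ s)) = (x ⊛ s, q ⊛ s)
            have e3 : (t ⊛ s).1 = x ⊛ s := by rw [← e1]; rfl
            rw [e3, hhom t s, e2]
      have hsub : G' ⊆ G := hGmax hG'mem Set.subset_union_left
      exact ⟨h ⟨b, 1, (RightAct.act_one b).symm⟩,
        hsub (Or.inr ⟨⟨b, 1, (RightAct.act_one b).symm⟩, rfl⟩)⟩
    -- the domain of G is all of B, else B would be decomposable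
    have hdom : ∀ b : B, ∃ q : Q, (b, q) ∈ G := by
      by_contra hcon
      push_neg at hcon
      obtain ⟨b0, hb0⟩ := hcon
      apply hB
      refine ⟨{x | ∃ q : Q, (x, q) ∈ G}, {x | ¬ ∃ q : Q, (x, q) ∈ G},
        ⟨?_, ?_⟩, ⟨?_, ?_⟩, ?_, ?_⟩
      · obtain ⟨c, hc⟩ := hC.1
        exact ⟨c, f c, hCf c hc⟩
      · rintro x ⟨q, hq⟩ s
        exact ⟨q ⊛ s, hcl hq s⟩
      · exact ⟨b0, fun hex => hb0 hex.choose hex.choose_spec⟩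
      · intro x hx s hxs
        exact hx (key x ⟨s, hxs⟩)
      · ext x
        simp only [Set.mem_union, Set.mem_univ, iff_true]
        exact or_not
      · ext x
        simp only [Set.mem_inter_iff, Set.mem_empty_iff_false, iff_false]
        rintro ⟨h1, h2⟩
        exact h2 h1
    -- assemble the total extension
    refine ⟨fun b => Classical.choose (hdom b), ?_, ?_⟩
    · intro b s
      exact hfun (Classical.choose_spec (hdom (b ⊛ s)))
        (hcl (Classical.choose_spec (hdom b)) s)
    · intro c hc
      exact hfun (Classical.choose_spec (hdom c)) (hCf c hc)
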